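/- arXiv:1605.00533 — 2 statements merged into one kernel-verified Lean document; each statement's English description precedes it below -/
import Mathlib

section
/- Let (Z_{in})_{1≤i≤n} be independent bounded real random variables and S_n = Σ_{i=1}^n Z_{in}. Let (δ_n) be a sequence of positive reals such that Σ_{i=1}^n Var[Z_{in}] ≤ δ_n and max_{1≤i≤n} |Z_{in}| ≤ (log 2 / 2)·√δ_n / √(log n) almost surely. Then for every L > 0 there exists N₀ ∈ ℕ such that for all n ≥ N₀, P( |S_n − E[S_n]| ≥ (1+L) √δ_n √(log n) ) ≤ 2 exp(−L log n) = 2 n^{−L}. -/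
/-!
Chernoff's method with the variance-sensitive bound `exp x ≤ 1 + x + x²` for `|x| ≤ 1`:
a centered variable `Y` with `|tY| ≤ 1` has `E e^{tY} ≤ 1 + t² Var Y ≤ e^{t² Var Y}`,
so by independence the centered sum `S` has `E e^{±tS} ≤ e^{t² δ_n}`. Take
`t = √(log n) / √δ_n`. The centered summands are bounded by `log 2 · √δ_n / √(log n)`,
so `|tY| ≤ log 2 ≤ 1`, and Markov's inequality at the threshold `(1 + L) √δ_n √(log n)`
bounds each tail by `exp (log n - (1 + L) log n) = n^{-L}`.
-/

open MeasureTheory ProbabilityTheory Finset Real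

lemma Finset.sum_Icc_one_eq_sum_fin {M : Type*} [AddCommMonoid M] (f : ℕ → M) (n : ℕ) :
    ∑ i ∈ Icc 1 n, f i = ∑ i : Fin n, f (i + 1) := by
  rw [Fin.sum_univ_eq_sum_range (fun i => f (i + 1)), range_eq_Ico, sum_Ico_add', zero_add,
    Ico_add_one_right_eq_Icc]

lemma Real.exp_le_one_add_add_sq {x : ℝ} (hx : |x| ≤ 1) : exp x ≤ 1 + x + x ^ 2 := by
  linarith [(abs_le.mp (abs_exp_sub_one_sub_id_le hx)).2]

namespace ProbabilityTheory

variable {Ω : Type*} [MeasurableSpace Ω] {P : Measure Ω}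

lemma ae_abs_sub_integral_le [IsProbabilityMeasure P] {X : Ω → ℝ} {B : ℝ}
    (hB : ∀ᵐ ω ∂P, |X ω| ≤ B) :
    ∀ᵐ ω ∂P, |X ω - P[X]| ≤ 2 * B := by
  have hmean : |P[X]| ≤ B := by
    simpa using norm_integral_le_of_norm_le_const (μ := P) (f := X) (by simpa using hB)
  filter_upwards [hB] with ω hω
  linarith [abs_sub (X ω) P[X]]

lemma mgf_sub_integral_le_exp_mul_variance [IsProbabilityMeasure P] {X : Ω → ℝ} {c t : ℝ}
    (hX : Integrable X P) (hc : ∀ᵐ ω ∂P, |X ω - P[X]| ≤ c) (htc : |t| * c ≤ 1) :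
    mgf (fun ω => X ω - P[X]) P t ≤ exp (t ^ 2 * Var[X; P]) := by
  set Y := fun ω => X ω - P[X]
  have hY_int : Integrable Y P := hX.sub (integrable_const _)
  have hY_meas : AEStronglyMeasurable Y P := hY_int.aestronglyMeasurable
  have hY_mean : P[Y] = 0 := by simp [Y, integral_sub hX (integrable_const _)]
  have hY_sq_int : Integrable (fun ω => Y ω ^ 2) P :=
    .of_bound (hY_meas.pow 2) (c ^ 2) <| hc.mono fun ω h => by
      simpa using pow_le_pow_left₀ (abs_nonneg _) h 2
  have hexp_le : ∀ᵐ ω ∂P, exp (t * Y ω) ≤ 1 + t * Y ω + t ^ 2 * Y ω ^ 2 := by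
    filter_upwards [hc] with ω hω
    have : |t * Y ω| ≤ 1 := by
      rw [abs_mul]; exact (mul_le_mul_of_nonneg_left hω (abs_nonneg t)).trans htc
    simpa [mul_pow] using exp_le_one_add_add_sq this
  have hlin_int : Integrable (fun ω => 1 + t * Y ω) P :=
    (integrable_const 1).add (hY_int.const_mul t)
  calc mgf Y P t ≤ ∫ ω, (1 + t * Y ω + t ^ 2 * Y ω ^ 2) ∂P :=
        integral_mono_ae (integrable_exp_mul_of_mem_Icc hY_meas.aemeasurable
          (hc.mono fun ω h => abs_le.mp h)) (hlin_int.add (hY_sq_int.const_mul _)) hexp_le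
    _ = 1 + t ^ 2 * Var[X; P] := by
        rw [integral_add hlin_int (hY_sq_int.const_mul _),
          integral_add (integrable_const 1) (hY_int.const_mul t), integral_const_mul,
          integral_const_mul, hY_mean, variance_eq_integral hX.aemeasurable]
        simp [Y]
    _ ≤ exp (t ^ 2 * Var[X; P]) := by linarith [add_one_le_exp (t ^ 2 * Var[X; P])]

lemma iIndepFun.mgf_sum_sub_integral_le [IsProbabilityMeasure P] {ι : Type*} [Fintype ι]
    {X : ι → Ω → ℝ} {c t : ℝ} (hindep : iIndepFun X P) (hint : ∀ i, Integrable (X i) P)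
    (hc : ∀ i, ∀ᵐ ω ∂P, |X i ω - P[X i]| ≤ c) (htc : |t| * c ≤ 1) :
    mgf (fun ω => ∑ i, (X i ω - P[X i])) P t ≤ exp (t ^ 2 * ∑ i, Var[X i; P]) := by
  have hcentered : iIndepFun (fun i ω => X i ω - P[X i]) P :=
    hindep.comp (fun i (y : ℝ) => y - ∫ ω, X i ω ∂P) fun _ => measurable_sub_const _
  calc mgf (fun ω => ∑ i, (X i ω - P[X i])) P t
      = ∏ i, mgf (fun ω => X i ω - P[X i]) P t := by
        rw [← hcentered.mgf_sum₀ (fun i => (hint i).aemeasurable.sub_const _), Finset.sum_fn]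
    _ ≤ ∏ i, exp (t ^ 2 * Var[X i; P]) :=
        prod_le_prod (fun i _ => mgf_nonneg)
          fun i _ => mgf_sub_integral_le_exp_mul_variance (hint i) (hc i) htc
    _ = exp (t ^ 2 * ∑ i, Var[X i; P]) := by rw [← exp_sum, mul_sum]

lemma measureReal_abs_ge_le_of_mgf_le [IsFiniteMeasure P] {W : Ω → ℝ} {t v : ℝ} (ε : ℝ)
    (ht : 0 ≤ t) (hint_pos : Integrable (fun ω => exp (t * W ω)) P)
    (hint_neg : Integrable (fun ω => exp (-t * W ω)) P)
    (hmgf_pos : mgf W P t ≤ exp v) (hmgf_neg : mgf W P (-t) ≤ exp v) :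
    P.real {ω | ε ≤ |W ω|} ≤ 2 * exp (v - t * ε) := by
  have hupper : P.real {ω | ε ≤ W ω} ≤ exp (v - t * ε) := calc
    _ ≤ exp (-t * ε) * mgf W P t := measure_ge_le_exp_mul_mgf ε ht hint_pos
    _ ≤ exp (-t * ε) * exp v := by gcongr
    _ = exp (v - t * ε) := by rw [← exp_add]; ring_nf
  have hlower : P.real {ω | W ω ≤ -ε} ≤ exp (v - t * ε) := calc
    _ ≤ exp (-(-t) * -ε) * mgf W P (-t) :=
        measure_le_le_exp_mul_mgf (-ε) (neg_nonpos.2 ht) hint_neg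
    _ ≤ exp (-(-t) * -ε) * exp v := by gcongr
    _ = exp (v - t * ε) := by rw [← exp_add]; ring_nf
  have hsplit : {ω | ε ≤ |W ω|} ⊆ {ω | ε ≤ W ω} ∪ {ω | W ω ≤ -ε} := fun ω hω => by
    rcases le_abs'.mp (Set.mem_ofPred.mp hω) with h | h
    · exact Or.inr h
    · exact Or.inl h
  calc P.real {ω | ε ≤ |W ω|} ≤ P.real ({ω | ε ≤ W ω} ∪ {ω | W ω ≤ -ε}) :=
        measureReal_mono hsplit
    _ ≤ P.real {ω | ε ≤ W ω} + P.real {ω | W ω ≤ -ε} := measureReal_union_le _ _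
    _ ≤ 2 * exp (v - t * ε) := by linarith

theorem iIndepFun.measureReal_abs_sum_sub_integral_ge_le [IsProbabilityMeasure P] {ι : Type*}
    [Fintype ι] {X : ι → Ω → ℝ} {c t v : ℝ} (ε : ℝ) (hindep : iIndepFun X P)
    (hint : ∀ i, Integrable (X i) P) (hc : ∀ i, ∀ᵐ ω ∂P, |X i ω - P[X i]| ≤ c)
    (ht : 0 ≤ t) (htc : t * c ≤ 1) (hv : ∑ i, Var[X i; P] ≤ v) :
    P.real {ω | ε ≤ |∑ i, X i ω - ∫ ω', ∑ i, X i ω' ∂P|} ≤ 2 * exp (t ^ 2 * v - t * ε) := by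
  have hcenter (ω : Ω) : ∑ i, X i ω - ∫ ω', ∑ i, X i ω' ∂P = ∑ i, (X i ω - P[X i]) := by
    rw [integral_finsetSum _ fun i _ => hint i, ← sum_sub_distrib]
  simp_rw [hcenter]
  have hbound : ∀ᵐ ω ∂P, |∑ i, (X i ω - P[X i])| ≤ Fintype.card ι * c := by
    filter_upwards [ae_all_iff.2 hc] with ω hω
    calc _ ≤ ∑ i, |X i ω - P[X i]| := abs_sum_le_sum_abs _ _
      _ ≤ ∑ _i : ι, c := sum_le_sum fun i _ => hω i
      _ = Fintype.card ι * c := by simp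
  have hint_exp (s : ℝ) : Integrable (fun ω => exp (s * ∑ i, (X i ω - P[X i]))) P :=
    integrable_exp_mul_of_mem_Icc
      (Finset.aemeasurable_fun_sum _ fun i _ => (hint i).aemeasurable.sub_const _)
      (hbound.mono fun ω h => abs_le.mp h)
  have hmgf (s : ℝ) (hs : |s| = t) :
      mgf (fun ω => ∑ i, (X i ω - P[X i])) P s ≤ exp (t ^ 2 * v) := by
    refine (hindep.mgf_sum_sub_integral_le hint hc (hs ▸ htc)).trans (exp_le_exp.2 ?_)
    rw [← sq_abs, hs]
    gcongr
  exact measureReal_abs_ge_le_of_mgf_le ε ht (hint_exp t) (hint_exp (-t))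
    (hmgf t (abs_of_nonneg ht)) (hmgf (-t) (by rw [abs_neg, abs_of_nonneg ht]))

end ProbabilityTheory

theorem hoeffding_type_bound_general
    {Ω : Type*} [MeasurableSpace Ω] (P : Measure Ω) [IsProbabilityMeasure P]
    (Z : ℕ → ℕ → Ω → ℝ)               -- `Z n i` is `Z_{in}`
    (δ : ℕ → ℝ) (hδpos : ∀ n, 0 < δ n)
    (hmeas : ∀ n i, Measurable (Z n i))
    -- for each `n`, the variables `Z_{1n}, …, Z_{nn}` are independent
    (hindep : ∀ n : ℕ, iIndepFun
        (fun i : Fin n => Z n (i + 1)) P)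
    -- `∑_{i=1}^n Var[Z_{in}] ≤ δ_n`
    (hvar : ∀ n, ∑ i ∈ Finset.Icc 1 n, variance (Z n i) P ≤ δ n)
    -- `max_{1 ≤ i ≤ n} |Z_{in}| ≤ (log 2 / 2) √δ_n / √(log n)` a.s.
    (hmax : ∀ n, ∀ᵐ ω ∂P, ∀ i ∈ Finset.Icc 1 n,
        |Z n i ω| ≤ (Real.log 2 / 2) * Real.sqrt (δ n) / Real.sqrt (Real.log n)) :
    ∀ L > (0:ℝ), ∃ N₀ : ℕ, ∀ n ≥ N₀,
      P {ω | (1 + L) * Real.sqrt (δ n) * Real.sqrt (Real.log n) ≤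
          |(∑ i ∈ Finset.Icc 1 n, Z n i ω) -
            ∫ ω', (∑ i ∈ Finset.Icc 1 n, Z n i ω') ∂P|}
        ≤ ENNReal.ofReal (2 * Real.exp (-L * Real.log n))
      ∧ 2 * Real.exp (-L * Real.log n) = 2 * (n:ℝ) ^ (-L) := by
  intro L _
  refine ⟨2, fun n hn => ⟨?_, ?_⟩⟩
  · have hlog : 0 < log n := log_pos (by exact_mod_cast hn)
    have hδ := hδpos n
    set B := log 2 / 2 * √(δ n) / √(log n)
    set t := √(log n) / √(δ n)
    have hbound (i : Fin n) : ∀ᵐ ω ∂P, |Z n (i + 1) ω| ≤ B :=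
      (hmax n).mono fun ω h => h _ (mem_Icc.2 ⟨by omega, by omega⟩)
    have htc : t * (2 * B) ≤ 1 := by
      rw [show t * (2 * B) = log 2 by simp only [t, B]; field_simp]
      linarith [log_two_lt_d9]
    have hexponent : t ^ 2 * δ n - t * ((1 + L) * √(δ n) * √(log n)) = -L * log n := by
      simp only [t]
      field_simp
      rw [sq_sqrt hlog.le, sq_sqrt hδ.le]
      ring
    have key := (hindep n).measureReal_abs_sum_sub_integral_ge_le
      ((1 + L) * √(δ n) * √(log n))
      (fun i => .of_bound (hmeas n _).aestronglyMeasurable B (by simpa using hbound i))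
      (fun i => ae_abs_sub_integral_le (hbound i)) (by positivity) htc
      (by simpa [sum_Icc_one_eq_sum_fin] using hvar n)
    simp_rw [sum_Icc_one_eq_sum_fin]
    rw [← ofReal_measureReal]
    exact ENNReal.ofReal_le_ofReal (hexponent ▸ key)
  · rw [rpow_def_of_pos (by positivity), mul_comm (log _)]

/-- **Hoeffding-type concentration bound (Lemma 4.4.1).**
Let `(Z_{in})_{1 ≤ i ≤ n}` be independent bounded real random variables on a probability
space, `S_n = ∑_{i=1}^n Z_{in}`, and let `(δ_n)` be positive reals with
`∑_{i=1}^n Var[Z_{in}] ≤ δ_n` and, almost surely,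
`max_{1 ≤ i ≤ n} |Z_{in}| ≤ (log 2 / 2) √δ_n / √(log n)`.
Then for every `L > 0` there is `N₀` such that for all `n ≥ N₀`,
`P(|S_n − E S_n| ≥ (1+L) √δ_n √(log n)) ≤ 2 exp(−L log n) = 2 n^{−L}`. -/
theorem hoeffding_type_bound
    {Ω : Type*} [MeasurableSpace Ω] (P : Measure Ω) [IsProbabilityMeasure P]
    (Z : ℕ → ℕ → Ω → ℝ)               -- `Z n i` is `Z_{in}`
    (δ : ℕ → ℝ) (hδpos : ∀ n, 0 < δ n)
    (hmeas : ∀ n i, Measurable (Z n i))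
    -- for each `n`, the variables `Z_{1n}, …, Z_{nn}` are independent
    (hindep : ∀ n : ℕ, iIndepFun
        (fun i : Fin n => Z n (i + 1)) P)
    -- boundedness (uniform almost sure bound for each `n`)
    (hbdd : ∀ n, ∃ M : ℝ, ∀ᵐ ω ∂P, ∀ i ∈ Finset.Icc 1 n, |Z n i ω| ≤ M)
    -- `∑_{i=1}^n Var[Z_{in}] ≤ δ_n`
    (hvar : ∀ n, ∑ i ∈ Finset.Icc 1 n, variance (Z n i) P ≤ δ n)
    -- `max_{1 ≤ i ≤ n} |Z_{in}| ≤ (log 2 / 2) √δ_n / √(log n)` a.s.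
    (hmax : ∀ n, ∀ᵐ ω ∂P, ∀ i ∈ Finset.Icc 1 n,
        |Z n i ω| ≤ (Real.log 2 / 2) * Real.sqrt (δ n) / Real.sqrt (Real.log n)) :
    ∀ L > (0:ℝ), ∃ N₀ : ℕ, ∀ n ≥ N₀,
      P {ω | (1 + L) * Real.sqrt (δ n) * Real.sqrt (Real.log n) ≤
          |(∑ i ∈ Finset.Icc 1 n, Z n i ω) -
            ∫ ω', (∑ i ∈ Finset.Icc 1 n, Z n i ω') ∂P|}
        ≤ ENNReal.ofReal (2 * Real.exp (-L * Real.log n))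
      ∧ 2 * Real.exp (-L * Real.log n) = 2 * (n:ℝ) ^ (-L) :=
  hoeffding_type_bound_general P Z δ hδpos hmeas hindep hvar hmax
end

section
/- For every γ ∈ [0, 1/2), every ν > 2, and every sequence (ε_m) of nonnegative reals with ε_m → 0: lim_{m→∞} sup_{1 ≤ k < ∞} ( k^{1/ν} + k·m^{1/ν − 1} + ε_m·k·m^{−1/2} + m^{−1/4}·k^{1/2}·(log k)^{1/2} ) / z(m,k,γ) = 0. -/
open Filter

/-- The normalisation (boundary) function `z(m,k,γ) = m^{1/2}(1+k/m)(k/(k+m))^γ`. -/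
noncomputable def zfun (m k : ℕ) (γ : ℝ) : ℝ :=
  Real.sqrt m * (1 + (k:ℝ)/(m:ℝ)) * ((k:ℝ)/((k:ℝ)+(m:ℝ))) ^ γ

open Real

lemma tendsto_natrpow (c : ℝ) (hc : c < 0) :
    Tendsto (fun m : ℕ => (m:ℝ) ^ c) atTop (nhds 0) := by
  have h := tendsto_rpow_neg_atTop (neg_pos.mpr hc)
  rw [neg_neg] at h
  exact h.comp tendsto_natCast_atTop_atTop

lemma sqrt_log_le (K : ℝ) (hK : 1 ≤ K) : Real.sqrt (Real.log K) ≤ 2 * K ^ ((1:ℝ)/8) := by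
  have hK0 : (0:ℝ) < K := lt_of_lt_of_le one_pos hK
  have h1 : Real.log K ≤ 4 * K ^ ((1:ℝ)/4) := by
    have h2 : Real.log (K ^ ((1:ℝ)/4)) ≤ K ^ ((1:ℝ)/4) - 1 :=
      Real.log_le_sub_one_of_pos (Real.rpow_pos_of_pos hK0 _)
    rw [Real.log_rpow hK0] at h2
    nlinarith
  calc Real.sqrt (Real.log K) ≤ Real.sqrt (4 * K ^ ((1:ℝ)/4)) := Real.sqrt_le_sqrt h1
    _ = 2 * K ^ ((1:ℝ)/8) := by
        rw [show (4:ℝ) = 2^2 by norm_num, Real.sqrt_mul (by positivity),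
          Real.sqrt_sq (by norm_num), Real.sqrt_eq_rpow, ← Real.rpow_mul hK0.le]
        norm_num

lemma key (γ ν : ℝ) (hγ0 : 0 ≤ γ) (hγ2 : γ < 1/2) (hν : 2 < ν) (em : ℝ) (hem : 0 ≤ em)
    (K M : ℝ) (hK : 1 ≤ K) (hM : 1 ≤ M) :
    K ^ ((1:ℝ)/ν) + K * M ^ ((1:ℝ)/ν - 1) + em * K * M ^ (-(1:ℝ)/2)
        + M ^ (-(1:ℝ)/4) * K ^ ((1:ℝ)/2) * Real.sqrt (Real.log K)
      ≤ (M ^ ((1:ℝ)/ν - 1/2) + M ^ (γ - 1/2) + M ^ ((1:ℝ)/ν - 1/2) + em + 2 * M ^ (-(1:ℝ)/8))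
        * (M ^ (-(1:ℝ)/2) * (K + M) ^ ((1:ℝ) - γ) * K ^ γ) := by
  have hK0 : (0:ℝ) < K := lt_of_lt_of_le one_pos hK
  have hM0 : (0:ℝ) < M := lt_of_lt_of_le one_pos hM
  set S : ℝ := K + M with hS
  have hS0 : (0:ℝ) < S := by positivity
  have hKS : K ≤ S := by simp [hS]; positivity
  have hMS : M ≤ S := by simp [hS]; positivity
  have hν0 : (0:ℝ) < ν := by linarith
  have hνlt : (1:ℝ)/ν < 1/2 := by
    rw [div_lt_div_iff₀ hν0 (by norm_num)]; linarith
  have hν0' : (0:ℝ) < 1/ν := by positivity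
  have hγ1 : (0:ℝ) ≤ 1 - γ := by linarith
  -- rpow products
  have hrM : ∀ a b : ℝ, M ^ a * M ^ b = M ^ (a+b) := fun a b => (Real.rpow_add hM0 a b).symm
  have hrK : ∀ a b : ℝ, K ^ a * K ^ b = K ^ (a+b) := fun a b => (Real.rpow_add hK0 a b).symm
  have hrS : ∀ a b : ℝ, S ^ a * S ^ b = S ^ (a+b) := fun a b => (Real.rpow_add hS0 a b).symm
  have hMsplit : ∀ a b : ℝ, M ^ a * (M ^ b * S ^ ((1:ℝ) - γ) * K ^ γ)
      = M ^ (a + b) * (S ^ ((1:ℝ) - γ) * K ^ γ) := by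
    intro a b; rw [← hrM]; ring
  -- term (b): K * M^(1/ν-1) ≤ M^(1/ν-1/2) * z
  have hb : K * M ^ ((1:ℝ)/ν - 1) ≤
      M ^ ((1:ℝ)/ν - 1/2) * (M ^ (-(1:ℝ)/2) * S ^ ((1:ℝ) - γ) * K ^ γ) := by
    have h1 : K ≤ S ^ ((1:ℝ) - γ) * K ^ γ := by
      calc K = K ^ ((1:ℝ) - γ) * K ^ γ := by rw [hrK]; norm_num
        _ ≤ S ^ ((1:ℝ) - γ) * K ^ γ :=
          mul_le_mul_of_nonneg_right (Real.rpow_le_rpow hK0.le hKS hγ1)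
            (Real.rpow_nonneg hK0.le _)
    calc K * M ^ ((1:ℝ)/ν - 1) ≤ (S ^ ((1:ℝ) - γ) * K ^ γ) * M ^ ((1:ℝ)/ν - 1) :=
          mul_le_mul_of_nonneg_right h1 (Real.rpow_pos_of_pos hM0 _).le
      _ = M ^ ((1:ℝ)/ν - 1/2) * (M ^ (-(1:ℝ)/2) * S ^ ((1:ℝ) - γ) * K ^ γ) := by
          rw [hMsplit, show (1:ℝ)/ν - 1/2 + -(1:ℝ)/2 = (1:ℝ)/ν - 1 by ring]; ring
  -- term (c)
  have hc : em * K * M ^ (-(1:ℝ)/2) ≤ em * (M ^ (-(1:ℝ)/2) * S ^ ((1:ℝ) - γ) * K ^ γ) := by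
    have h1 : K ≤ S ^ ((1:ℝ) - γ) * K ^ γ := by
      calc K = K ^ ((1:ℝ) - γ) * K ^ γ := by rw [hrK]; norm_num
        _ ≤ S ^ ((1:ℝ) - γ) * K ^ γ :=
          mul_le_mul_of_nonneg_right (Real.rpow_le_rpow hK0.le hKS hγ1)
            (Real.rpow_nonneg hK0.le _)
    calc em * K * M ^ (-(1:ℝ)/2) ≤ em * (S ^ ((1:ℝ) - γ) * K ^ γ) * M ^ (-(1:ℝ)/2) := by
          apply mul_le_mul_of_nonneg_right _ (Real.rpow_pos_of_pos hM0 _).le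
          exact mul_le_mul_of_nonneg_left h1 hem
      _ = em * (M ^ (-(1:ℝ)/2) * S ^ ((1:ℝ) - γ) * K ^ γ) := by ring
  -- term (a)
  have ha : K ^ ((1:ℝ)/ν) ≤ (M ^ ((1:ℝ)/ν - 1/2) + M ^ (γ - 1/2)) *
      (M ^ (-(1:ℝ)/2) * S ^ ((1:ℝ) - γ) * K ^ γ) := by
    have hz0 : (0:ℝ) ≤ M ^ (-(1:ℝ)/2) * S ^ ((1:ℝ) - γ) * K ^ γ := by positivity
    rcases le_or_gt γ ((1:ℝ)/ν) with hcase | hcase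
    · have h1 : K ^ ((1:ℝ)/ν) ≤ S ^ ((1:ℝ)/ν - γ) * K ^ γ := by
        calc K ^ ((1:ℝ)/ν) = K ^ ((1:ℝ)/ν - γ) * K ^ γ := by rw [hrK]; ring_nf
          _ ≤ S ^ ((1:ℝ)/ν - γ) * K ^ γ :=
            mul_le_mul_of_nonneg_right (Real.rpow_le_rpow hK0.le hKS (by linarith))
              (Real.rpow_nonneg hK0.le _)
      have h2 : S ^ ((1:ℝ)/ν - γ) ≤ M ^ ((1:ℝ)/ν - 1) * S ^ ((1:ℝ) - γ) := by
        calc S ^ ((1:ℝ)/ν - γ) = S ^ ((1:ℝ)/ν - 1) * S ^ ((1:ℝ) - γ) := by rw [hrS]; ring_nf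
          _ ≤ M ^ ((1:ℝ)/ν - 1) * S ^ ((1:ℝ) - γ) :=
            mul_le_mul_of_nonneg_right
              (Real.rpow_le_rpow_of_nonpos hM0 hMS (by linarith))
              (Real.rpow_nonneg hS0.le _)
      have h3 : K ^ ((1:ℝ)/ν) ≤ M ^ ((1:ℝ)/ν - 1) * S ^ ((1:ℝ) - γ) * K ^ γ := by
        calc K ^ ((1:ℝ)/ν) ≤ S ^ ((1:ℝ)/ν - γ) * K ^ γ := h1
          _ ≤ M ^ ((1:ℝ)/ν - 1) * S ^ ((1:ℝ) - γ) * K ^ γ :=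
            mul_le_mul_of_nonneg_right h2 (Real.rpow_nonneg hK0.le _)
      calc K ^ ((1:ℝ)/ν) ≤ M ^ ((1:ℝ)/ν - 1) * S ^ ((1:ℝ) - γ) * K ^ γ := h3
        _ = M ^ ((1:ℝ)/ν - 1/2) * (M ^ (-(1:ℝ)/2) * S ^ ((1:ℝ) - γ) * K ^ γ) := by
            rw [hMsplit, show (1:ℝ)/ν - 1/2 + -(1:ℝ)/2 = (1:ℝ)/ν - 1 by ring]; ring
        _ ≤ (M ^ ((1:ℝ)/ν - 1/2) + M ^ (γ - 1/2)) *
            (M ^ (-(1:ℝ)/2) * S ^ ((1:ℝ) - γ) * K ^ γ) := by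
            apply mul_le_mul_of_nonneg_right _ hz0
            nlinarith [Real.rpow_pos_of_pos hM0 (γ - 1/2)]
    · have h1 : K ^ ((1:ℝ)/ν) ≤ K ^ γ := Real.rpow_le_rpow_of_exponent_le hK hcase.le
      have h2 : (1:ℝ) ≤ M ^ (γ - 1) * S ^ ((1:ℝ) - γ) := by
        calc (1:ℝ) = M ^ (γ - 1) * M ^ ((1:ℝ) - γ) := by rw [hrM]; norm_num
          _ ≤ M ^ (γ - 1) * S ^ ((1:ℝ) - γ) :=
            mul_le_mul_of_nonneg_left (Real.rpow_le_rpow hM0.le hMS hγ1)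
              (Real.rpow_nonneg hM0.le _)
      calc K ^ ((1:ℝ)/ν) ≤ K ^ γ := h1
        _ ≤ (M ^ (γ - 1) * S ^ ((1:ℝ) - γ)) * K ^ γ := by
            nlinarith [Real.rpow_pos_of_pos hK0 γ]
        _ = M ^ (γ - 1/2) * (M ^ (-(1:ℝ)/2) * S ^ ((1:ℝ) - γ) * K ^ γ) := by
            rw [hMsplit, show γ - 1/2 + -(1:ℝ)/2 = γ - 1 by ring]; ring
        _ ≤ (M ^ ((1:ℝ)/ν - 1/2) + M ^ (γ - 1/2)) *
            (M ^ (-(1:ℝ)/2) * S ^ ((1:ℝ) - γ) * K ^ γ) := by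
            apply mul_le_mul_of_nonneg_right _ hz0
            nlinarith [Real.rpow_pos_of_pos hM0 ((1:ℝ)/ν - 1/2)]
  -- term (d)
  have hd : M ^ (-(1:ℝ)/4) * K ^ ((1:ℝ)/2) * Real.sqrt (Real.log K) ≤
      2 * M ^ (-(1:ℝ)/8) * (M ^ (-(1:ℝ)/2) * S ^ ((1:ℝ) - γ) * K ^ γ) := by
    have h1 : M ^ (-(1:ℝ)/4) * K ^ ((1:ℝ)/2) * Real.sqrt (Real.log K) ≤
        2 * (M ^ (-(1:ℝ)/4) * K ^ ((5:ℝ)/8)) := by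
      calc M ^ (-(1:ℝ)/4) * K ^ ((1:ℝ)/2) * Real.sqrt (Real.log K)
          ≤ M ^ (-(1:ℝ)/4) * K ^ ((1:ℝ)/2) * (2 * K ^ ((1:ℝ)/8)) := by
            apply mul_le_mul_of_nonneg_left (sqrt_log_le K hK) (by positivity)
        _ = 2 * (M ^ (-(1:ℝ)/4) * (K ^ ((1:ℝ)/2) * K ^ ((1:ℝ)/8))) := by ring
        _ = 2 * (M ^ (-(1:ℝ)/4) * K ^ ((5:ℝ)/8)) := by rw [hrK]; norm_num
    have h2 : M ^ (-(1:ℝ)/4) * K ^ ((5:ℝ)/8) ≤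
        M ^ (-(1:ℝ)/8) * (M ^ (-(1:ℝ)/2) * S ^ ((1:ℝ) - γ) * K ^ γ) := by
      calc M ^ (-(1:ℝ)/4) * K ^ ((5:ℝ)/8)
          = M ^ (-(1:ℝ)/4) * (K ^ ((5:ℝ)/8 - γ) * K ^ γ) := by rw [hrK]; ring_nf
        _ ≤ M ^ (-(1:ℝ)/4) * (S ^ ((5:ℝ)/8 - γ) * K ^ γ) := by
            apply mul_le_mul_of_nonneg_left _ (by positivity)
            exact mul_le_mul_of_nonneg_right
              (Real.rpow_le_rpow hK0.le hKS (by linarith)) (Real.rpow_nonneg hK0.le _)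
        _ = M ^ (-(1:ℝ)/4) * (S ^ (-(3:ℝ)/8) * S ^ ((1:ℝ) - γ) * K ^ γ) := by
            rw [hrS]; ring_nf
        _ ≤ M ^ (-(1:ℝ)/4) * (M ^ (-(3:ℝ)/8) * S ^ ((1:ℝ) - γ) * K ^ γ) := by
            apply mul_le_mul_of_nonneg_left _ (by positivity)
            apply mul_le_mul_of_nonneg_right _ (Real.rpow_nonneg hK0.le _)
            exact mul_le_mul_of_nonneg_right
              (Real.rpow_le_rpow_of_nonpos hM0 hMS (by norm_num)) (Real.rpow_nonneg hS0.le _)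
        _ = M ^ (-(1:ℝ)/8) * (M ^ (-(1:ℝ)/2) * S ^ ((1:ℝ) - γ) * K ^ γ) := by
            rw [hMsplit, hMsplit, show -(1:ℝ)/4 + -(3:ℝ)/8 = -(1:ℝ)/8 + -(1:ℝ)/2 by norm_num]
    calc M ^ (-(1:ℝ)/4) * K ^ ((1:ℝ)/2) * Real.sqrt (Real.log K)
        ≤ 2 * (M ^ (-(1:ℝ)/4) * K ^ ((5:ℝ)/8)) := h1
      _ ≤ 2 * (M ^ (-(1:ℝ)/8) * (M ^ (-(1:ℝ)/2) * S ^ ((1:ℝ) - γ) * K ^ γ)) := by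
          linarith
      _ = 2 * M ^ (-(1:ℝ)/8) * (M ^ (-(1:ℝ)/2) * S ^ ((1:ℝ) - γ) * K ^ γ) := by ring
  have expand : (M ^ ((1:ℝ)/ν - 1/2) + M ^ (γ - 1/2) + M ^ ((1:ℝ)/ν - 1/2) + em
        + 2 * M ^ (-(1:ℝ)/8)) * (M ^ (-(1:ℝ)/2) * S ^ ((1:ℝ) - γ) * K ^ γ)
      = (M ^ ((1:ℝ)/ν - 1/2) + M ^ (γ - 1/2)) * (M ^ (-(1:ℝ)/2) * S ^ ((1:ℝ) - γ) * K ^ γ)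
      + M ^ ((1:ℝ)/ν - 1/2) * (M ^ (-(1:ℝ)/2) * S ^ ((1:ℝ) - γ) * K ^ γ)
      + em * (M ^ (-(1:ℝ)/2) * S ^ ((1:ℝ) - γ) * K ^ γ)
      + 2 * M ^ (-(1:ℝ)/8) * (M ^ (-(1:ℝ)/2) * S ^ ((1:ℝ) - γ) * K ^ γ) := by ring
  rw [expand]
  exact add_le_add (add_le_add (add_le_add ha hb) hc) hd

lemma zfun_eq (m k : ℕ) (γ : ℝ) (hm : 1 ≤ m) (hk : 1 ≤ k) :
    zfun m k γ = (m:ℝ) ^ (-(1:ℝ)/2) * ((k:ℝ) + (m:ℝ)) ^ ((1:ℝ) - γ) * (k:ℝ) ^ γ := by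
  have hM0 : (0:ℝ) < (m:ℝ) := by exact_mod_cast hm
  have hK0 : (0:ℝ) < (k:ℝ) := by exact_mod_cast hk
  have hS0 : (0:ℝ) < (k:ℝ) + (m:ℝ) := by linarith
  unfold zfun
  rw [Real.sqrt_eq_rpow, Real.div_rpow hK0.le hS0.le,
    show -(1:ℝ)/2 = 1/2 - 1 by ring, Real.rpow_sub hM0,
    Real.rpow_sub hS0, Real.rpow_one, Real.rpow_one]
  rw [show 1 + (k:ℝ)/(m:ℝ) = ((k:ℝ)+(m:ℝ))/(m:ℝ) by
    rw [eq_div_iff hM0.ne', add_mul, one_mul, div_mul_cancel₀ _ hM0.ne', add_comm]]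
  ring

/-- For every `γ ∈ [0,1/2)`, `ν > 2` and nonnegative `ε_m → 0`,
`sup_{1 ≤ k < ∞} (k^{1/ν} + k m^{1/ν−1} + ε_m k m^{−1/2} + m^{−1/4} k^{1/2} (log k)^{1/2}) / z(m,k,γ) → 0`
as `m → ∞`. -/
theorem sup_remainder_over_boundary_tendsto_zero
    (γ ν : ℝ) (hγ : γ ∈ Set.Ico (0:ℝ) (1/2)) (hν : 2 < ν)
    (e : ℕ → ℝ) (he0 : ∀ m, 0 ≤ e m) (helim : Tendsto e atTop (nhds 0)) :
    Tendsto (fun m : ℕ =>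
        ⨆ k : {k : ℕ // 1 ≤ k},
          ((k.1:ℝ) ^ ((1:ℝ)/ν) + (k.1:ℝ) * (m:ℝ) ^ ((1:ℝ)/ν - 1)
              + e m * (k.1:ℝ) * (m:ℝ) ^ (-(1:ℝ)/2)
              + (m:ℝ) ^ (-(1:ℝ)/4) * (k.1:ℝ) ^ ((1:ℝ)/2) * Real.sqrt (Real.log k.1))
            / zfun m k.1 γ)
      atTop (nhds 0) := by
  haveI : Nonempty {k : ℕ // 1 ≤ k} := ⟨⟨1, le_refl 1⟩⟩
  obtain ⟨hγ0, hγ2⟩ := hγ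
  have hν0 : (0:ℝ) < ν := by linarith
  have hνlt : (1:ℝ)/ν - 1/2 < 0 := by
    have : (1:ℝ)/ν < 1/2 := by rw [div_lt_div_iff₀ hν0 (by norm_num)]; linarith
    linarith
  set B : ℕ → ℝ := fun m => (m:ℝ) ^ ((1:ℝ)/ν - 1/2) + (m:ℝ) ^ (γ - 1/2)
      + (m:ℝ) ^ ((1:ℝ)/ν - 1/2) + e m + 2 * (m:ℝ) ^ (-(1:ℝ)/8) with hBdef
  have hB : Tendsto B atTop (nhds 0) := by
    have h1 := tendsto_natrpow ((1:ℝ)/ν - 1/2) hνlt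
    have h2 := tendsto_natrpow (γ - 1/2) (by linarith)
    have h3 : Tendsto (fun m : ℕ => 2 * (m:ℝ) ^ (-(1:ℝ)/8)) atTop (nhds (2*0)) :=
      (tendsto_natrpow (-(1:ℝ)/8) (by norm_num)).const_mul 2
    rw [hBdef, show (0:ℝ) = 0+0+0+0+2*0 by norm_num]
    exact (((h1.add h2).add h1).add helim).add h3
  apply squeeze_zero' (g := B)
  · filter_upwards with m
    apply Real.iSup_nonneg
    intro k
    apply div_nonneg
    · have h1 : (0:ℝ) ≤ (k.1:ℝ) ^ ((1:ℝ)/ν) := Real.rpow_nonneg (Nat.cast_nonneg _) _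
      have h2 : (0:ℝ) ≤ (k.1:ℝ) * (m:ℝ) ^ ((1:ℝ)/ν - 1) := by positivity
      have h3 : (0:ℝ) ≤ e m * (k.1:ℝ) * (m:ℝ) ^ (-(1:ℝ)/2) := by
        have := he0 m; positivity
      have h4 : (0:ℝ) ≤ (m:ℝ) ^ (-(1:ℝ)/4) * (k.1:ℝ) ^ ((1:ℝ)/2) * Real.sqrt (Real.log k.1) := by
        positivity
      linarith
    · unfold zfun; positivity
  · filter_upwards [eventually_ge_atTop 1] with m hm
    apply ciSup_le
    intro k
    have hK : (1:ℝ) ≤ (k.1:ℝ) := by exact_mod_cast k.2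
    have hM : (1:ℝ) ≤ (m:ℝ) := by exact_mod_cast hm
    rw [zfun_eq m k.1 γ hm k.2, div_le_iff₀ (by positivity)]
    exact key γ ν hγ0 hγ2 hν (e m) (he0 m) (k.1:ℝ) (m:ℝ) hK hM
  · exact hB
end
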